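/- Let 𝒞^d denote the convex cone of symmetric d×d real matrices with zero diagonal that are strictly conditionally negative definite. Then det(CM(Γ)) > 0 for every Γ ∈ 𝒞^d, and the function Γ ↦ −(1/2) log det(CM(Γ)) is strictly convex on 𝒞^d: for all Γ_1, Γ_2 ∈ 𝒞^d with Γ_1 ≠ Γ_2 and all t ∈ (0,1), −(1/2) log det(CM(tΓ_1 + (1−t)Γ_2)) < −(t/2) log det(CM(Γ_1)) − ((1−t)/2) log det(CM(Γ_2)). -/

import Mathlib

open Matrix Finset

/-- `Θ(Q)`: `Θ(Q)_{ij} = −Q_{ij}` for `i ≠ j` and `Θ(Q)_{ii} = ∑_{j≠i} Q_{ij}`. -/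
noncomputable def thetaOf {d : ℕ} (Q : Matrix (Fin d) (Fin d) ℝ) :
    Matrix (Fin d) (Fin d) ℝ :=
  Matrix.of fun i j => if i = j then ∑ l ∈ univ.filter (fun l => l ≠ i), Q i l else -Q i j

/-- Membership in `𝒬`: symmetric, zero diagonal, and `xᵀΘ(Q)x > 0` for every nonzero
`x` with `∑ᵢ xᵢ = 0`. -/
def memQ {d : ℕ} (Q : Matrix (Fin d) (Fin d) ℝ) : Prop :=
  Q.IsSymm ∧ (∀ i, Q i i = 0) ∧
    ∀ x : Fin d → ℝ, x ≠ 0 → (∑ i, x i) = 0 → 0 < x ⬝ᵥ (thetaOf Q).mulVec x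

/-- The centering matrix `P = I − (1/d)𝟙𝟙ᵀ`. -/
noncomputable def Pmat (d : ℕ) : Matrix (Fin d) (Fin d) ℝ :=
  1 - ((d : ℝ)⁻¹) • Matrix.of (fun _ _ : Fin d => (1 : ℝ))

/-- `S` is the matrix `Σ(Q)`: the unique symmetric matrix with `Σ(Q)𝟙 = 0` and
`Θ(Q)Σ(Q) = P`. -/
def isSigmaOf {d : ℕ} (Q S : Matrix (Fin d) (Fin d) ℝ) : Prop :=
  S.IsSymm ∧ S.mulVec (fun _ => 1) = 0 ∧ thetaOf Q * S = Pmat d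

/-- The variogram associated with `Σ`: `Γ_{ij} = Σ_{ii} + Σ_{jj} − 2Σ_{ij}`. -/
noncomputable def gammaOf {d : ℕ} (S : Matrix (Fin d) (Fin d) ℝ) :
    Matrix (Fin d) (Fin d) ℝ :=
  Matrix.of fun i j => S i i + S j j - 2 * S i j

/-- The inner product `⟨A, B⟩ = ∑_{i<j} A_{ij} B_{ij}` on symmetric matrices with
zero diagonal. -/
noncomputable def sinner {d : ℕ} (A B : Matrix (Fin d) (Fin d) ℝ) : ℝ :=
  ∑ p ∈ univ.filter (fun p : Fin d × Fin d => p.1 < p.2), A p.1 p.2 * B p.1 p.2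

open Classical in
/-- The spanning tree polynomial `τ(Q) = ∑_T ∏_{{i,j}∈T} Q_{ij}`, summed over all
spanning trees of the complete graph on `{1, …, d}`. -/
noncomputable def tau {d : ℕ} (Q : Matrix (Fin d) (Fin d) ℝ) : ℝ :=
  ∑ T ∈ (univ : Finset (SimpleGraph (Fin d))).filter (fun T => T.IsTree),
    ∏ p ∈ univ.filter (fun p : Fin d × Fin d => p.1 < p.2 ∧ T.Adj p.1 p.2), Q p.1 p.2

/-- The Cayley–Menger matrix of `Γ`. -/
noncomputable def CM {d : ℕ} (Γ : Matrix (Fin d) (Fin d) ℝ) :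
    Matrix (Fin (d + 1)) (Fin (d + 1)) ℝ :=
  Matrix.of fun a b =>
    if ha : (a : ℕ) < d then
      (if hb : (b : ℕ) < d then -Γ ⟨a, ha⟩ ⟨b, hb⟩ / 2 else 1)
    else (if (b : ℕ) < d then -1 else 0)

/-- Membership in the cone `𝒞^d` of symmetric matrices with zero diagonal that are
strictly conditionally negative definite. -/
def memC {d : ℕ} (Γ : Matrix (Fin d) (Fin d) ℝ) : Prop :=
  Γ.IsSymm ∧ (∀ i, Γ i i = 0) ∧
    ∀ x : Fin d → ℝ, x ≠ 0 → (∑ i, x i) = 0 → x ⬝ᵥ Γ.mulVec x < 0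

/-!
Write `d = n + 1` and let `V` be the `(n + 1) × n` matrix with columns `e_j - e_last`. A Schur
complement with respect to the last row and column of `Γ` and the bordering row and column of
`CM Γ` gives `det (CM Γ) = det N(Γ)` with `N(Γ) = -½ Vᵀ Γ V` (`gramAtLast`). Since `V` maps `ℝⁿ`
bijectively onto the vectors with coordinate sum zero, `N(Γ)` is positive definite when `Γ` is
strictly conditionally negative definite; moreover `Γ ↦ N(Γ)` is linear, and injective on
symmetric matrices with zero diagonal. The claim is thus the strict concavity of `log det` on
positive definite matrices, which after congruence reduces to the strict concavity of `log` on
the eigenvalues.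
-/

section LogDet

open scoped MatrixOrder

lemma Matrix.convex_setOf_posDef {n : Type*} [Fintype n] :
    Convex ℝ {A : Matrix n n ℝ | A.PosDef} := by
  intro A hA B hB a b ha hb hab
  rcases ha.eq_or_lt with rfl | ha
  · simpa [show b = 1 by linarith] using hB
  · exact (hA.smul ha).add_posSemidef (hB.posSemidef.smul hb)

lemma Real.mul_log_le_log_add_mul {a b x : ℝ} (ha : 0 < a) (hb : 0 < b) (hab : a + b = 1)
    (hx : 0 < x) : b * Real.log x ≤ Real.log (a + b * x) := by
  simpa using strictConcaveOn_log_Ioi.concaveOn.2 (Set.mem_Ioi.2 one_pos) hx ha.le hb.le hab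

lemma Real.mul_log_lt_log_add_mul {a b x : ℝ} (ha : 0 < a) (hb : 0 < b) (hab : a + b = 1)
    (hx : 0 < x) (hx1 : x ≠ 1) : b * Real.log x < Real.log (a + b * x) := by
  simpa using strictConcaveOn_log_Ioi.2 (Set.mem_Ioi.2 one_pos) hx hx1.symm ha hb hab

variable {n : Type*} [Fintype n] [DecidableEq n]

lemma Matrix.IsHermitian.det_cfc {𝕜 : Type*} [RCLike 𝕜] {A : Matrix n n 𝕜} (hA : A.IsHermitian)
    (f : ℝ → ℝ) : (cfc f A).det = ∏ i, (f (hA.eigenvalues i) : 𝕜) := by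
  simp [hA.cfc_eq, IsHermitian.cfc, -Unitary.conjStarAlgAut_apply]

lemma Matrix.IsHermitian.eq_one_of_eigenvalues_eq_one {𝕜 : Type*} [RCLike 𝕜] {A : Matrix n n 𝕜}
    (hA : A.IsHermitian) (h : ∀ i, hA.eigenvalues i = 1) : A = 1 := by
  rw [← cfc_id' ℝ A, cfc_congr (g := fun _ => 1), cfc_const_one ℝ A]
  simp [Set.EqOn, hA.spectrum_real_eq_range_eigenvalues, h]

lemma Matrix.PosDef.mul_log_det_lt_log_det_smul_one_add_smul {C : Matrix n n ℝ} (hC : C.PosDef)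
    (hC1 : C ≠ 1) {a b : ℝ} (ha : 0 < a) (hb : 0 < b) (hab : a + b = 1) :
    b * Real.log C.det < Real.log (a • 1 + b • C).det := by
  set μ := hC.1.eigenvalues
  have hμ (i) : 0 < μ i := hC.eigenvalues_pos i
  have hdet : C.det = ∏ i, μ i := by simpa using hC.1.det_eq_prod_eigenvalues
  have hdet_affine : (a • 1 + b • C).det = ∏ i, (a + b * μ i) := by
    have h := hC.1.det_cfc (fun x => a + b * x)
    rw [cfc_add .., cfc_const_mul .., cfc_const .., cfc_id' .., Algebra.algebraMap_eq_smul_one]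
      at h
    simpa using h
  obtain ⟨i₀, hi₀⟩ : ∃ i, μ i ≠ 1 := by
    by_contra! h
    exact hC1 (hC.1.eq_one_of_eigenvalues_eq_one h)
  rw [hdet, hdet_affine, Real.log_prod fun i _ => (hμ i).ne',
    Real.log_prod fun i _ => (by nlinarith [hμ i] : 0 < a + b * μ i).ne', mul_sum]
  exact sum_lt_sum (fun i _ => Real.mul_log_le_log_add_mul ha hb hab (hμ i))
    ⟨i₀, mem_univ _, Real.mul_log_lt_log_add_mul ha hb hab (hμ i₀) hi₀⟩

theorem Matrix.strictConcaveOn_log_det :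
    StrictConcaveOn ℝ {A : Matrix n n ℝ | A.PosDef} (fun A => Real.log A.det) := by
  refine ⟨convex_setOf_posDef, fun A hA B hB hAB a b ha hb hab => ?_⟩
  obtain ⟨S, rfl⟩ := CStarAlgebra.nonneg_iff_eq_star_mul_self.mp hA.posSemidef.nonneg
  have hS : IsUnit S := isUnit_of_mul_isUnit_right hA.isUnit
  set C := star S⁻¹ * B * S⁻¹
  have hBC : B = star S * C * S := by
    have hSS : S⁻¹ * S = 1 := nonsing_inv_mul S ((isUnit_iff_isUnit_det S).1 hS)
    rw [show star S * C * S = star (S⁻¹ * S) * B * (S⁻¹ * S) by simp only [C, star_mul, mul_assoc],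
      hSS, star_one, one_mul, mul_one]
  have hC : C.PosDef := (IsUnit.posDef_star_left_conjugate_iff (isUnit_nonsing_inv_iff.2 hS)).2 hB
  have hC1 : C ≠ 1 := fun h => hAB (by rw [hBC, h, mul_one])
  have hcomb : a • (star S * S) + b • B = star S * (a • 1 + b • C) * S := by
    simp [hBC, mul_add, add_mul, mul_assoc]
  have hdet_conj (M : Matrix n n ℝ) : (star S * M * S).det = (star S * S).det * M.det := by
    simp only [det_mul]; ring
  have hA_det : 0 < (star S * S).det := hA.det_pos
  have hcomb_det : 0 < (a • 1 + b • C).det := ((PosDef.one.smul ha).add (hC.smul hb)).det_pos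
  have key := hC.mul_log_det_lt_log_det_smul_one_add_smul hC1 ha hb hab
  have hsplit : a * Real.log (star S * S).det + b * Real.log (star S * S).det =
      Real.log (star S * S).det := by rw [← add_mul, hab, one_mul]
  simp only [smul_eq_mul]
  rw [hcomb, hBC, hdet_conj, hdet_conj, Real.log_mul hA_det.ne' hC.det_pos.ne',
    Real.log_mul hA_det.ne' hcomb_det.ne', mul_add]
  linarith

end LogDet

section CayleyMenger

variable {d : ℕ} (Γ : Matrix (Fin d) (Fin d) ℝ)

@[simp] lemma CM_castSucc_castSucc (i j : Fin d) : CM Γ i.castSucc j.castSucc = -Γ i j / 2 := by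
  simp [CM]

@[simp] lemma CM_castSucc_last (i : Fin d) : CM Γ i.castSucc (Fin.last d) = 1 := by simp [CM]

@[simp] lemma CM_last_castSucc (j : Fin d) : CM Γ (Fin.last d) j.castSucc = -1 := by simp [CM]

@[simp] lemma CM_last_last : CM Γ (Fin.last d) (Fin.last d) = 0 := by simp [CM]

end CayleyMenger

section GramAtLast

variable {n : ℕ}

noncomputable def diffLast (n : ℕ) : Matrix (Fin (n + 1)) (Fin n) ℝ :=
  of fun a j => (if a = j.castSucc then 1 else 0) - (if a = Fin.last n then 1 else 0)

/-- For a matrix `Γ` of squared distances, this is the Gram matrix of the points seen from the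
last one. -/
noncomputable def gramAtLast (Γ : Matrix (Fin (n + 1)) (Fin (n + 1)) ℝ) :
    Matrix (Fin n) (Fin n) ℝ :=
  (diffLast n)ᵀ * (-(1 / 2 : ℝ) • Γ) * diffLast n

lemma gramAtLast_apply (Γ : Matrix (Fin (n + 1)) (Fin (n + 1)) ℝ) (j k : Fin n) :
    gramAtLast Γ j k = (Γ j.castSucc (Fin.last n) + Γ (Fin.last n) k.castSucc
      - Γ j.castSucc k.castSucc - Γ (Fin.last n) (Fin.last n)) / 2 := by
  simp only [gramAtLast, diffLast, one_div, neg_smul, Matrix.mul_neg, Matrix.mul_smul, mul_apply,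
    Matrix.neg_apply, Matrix.smul_apply, transpose_apply, of_apply, sub_mul, ite_mul, one_mul,
    zero_mul, sum_sub_distrib, sum_ite_eq', mem_univ, ↓reduceIte, smul_eq_mul, mul_sub, neg_sub,
    mul_ite, mul_one, mul_zero]
  ring

lemma gramAtLast_add (Γ₁ Γ₂ : Matrix (Fin (n + 1)) (Fin (n + 1)) ℝ) :
    gramAtLast (Γ₁ + Γ₂) = gramAtLast Γ₁ + gramAtLast Γ₂ := by
  simp only [gramAtLast, smul_add, Matrix.mul_add, Matrix.add_mul]

lemma gramAtLast_smul (c : ℝ) (Γ : Matrix (Fin (n + 1)) (Fin (n + 1)) ℝ) :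
    gramAtLast (c • Γ) = c • gramAtLast Γ := by
  simp only [gramAtLast, smul_comm _ c, Matrix.mul_smul, Matrix.smul_mul]

lemma diffLast_mulVec (x : Fin n → ℝ) : diffLast n *ᵥ x = Fin.snoc x (-∑ j, x j) := by
  funext a
  induction a using Fin.lastCases with
  | last => simp [diffLast, mulVec, dotProduct, (Fin.castSucc_lt_last _).ne']
  | cast i => simp [diffLast, mulVec, dotProduct, (Fin.castSucc_lt_last i).ne]

lemma det_CM_eq_det_gramAtLast (Γ : Matrix (Fin (n + 1)) (Fin (n + 1)) ℝ) :
    (CM Γ).det = (gramAtLast Γ).det := by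
  let e : Fin n ⊕ Fin 2 ≃ Fin (n + 2) := finSumFinEquiv
  have hl (j : Fin n) : e (.inl j) = j.castSucc.castSucc := by ext; simp [e]
  have h0 : e (.inr 0) = (Fin.last n).castSucc := by ext; simp [e]
  have h1 : e (.inr 1) = Fin.last (n + 1) := by ext; simp [e]
  set M := (CM Γ).submatrix e e
  set a := -Γ (Fin.last n) (Fin.last n) / 2
  have hD : M.toBlocks₂₂ = !![a, 1; -1, 0] := by
    ext i j; fin_cases i <;> fin_cases j <;> simp [M, toBlocks₂₂, h0, h1, a]
  let _ : Invertible M.toBlocks₂₂ :=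
    invertibleOfRightInverse _ !![0, -1; 1, a] (by
      rw [hD]; ext i j; fin_cases i <;> fin_cases j <;> simp)
  have hDinv : ⅟M.toBlocks₂₂ = !![0, -1; 1, a] := rfl
  rw [← det_submatrix_equiv_self e, show (CM Γ).submatrix e e = M from rfl,
    ← fromBlocks_toBlocks M, det_fromBlocks₂₂, hDinv, hD, det_fin_two_of]
  simp only [mul_zero, mul_neg, mul_one, zero_sub, neg_neg, one_mul]
  congr 1
  ext j k
  simp only [M, a, toBlocks₁₁, toBlocks₁₂, toBlocks₂₁, submatrix_apply, hl, h0, h1,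
    CM_castSucc_castSucc, CM_castSucc_last, CM_last_castSucc, Matrix.sub_apply, of_apply, mul_apply,
    cons_val', cons_val_fin_one, Fin.sum_univ_two, Fin.isValue, cons_val_zero, cons_val_one,
    one_mul, mul_zero, zero_add, mul_neg, mul_one, neg_add_rev, neg_neg, gramAtLast_apply]
  ring

lemma gramAtLast_posDef {Γ : Matrix (Fin (n + 1)) (Fin (n + 1)) ℝ} (hΓ : memC Γ) :
    (gramAtLast Γ).PosDef := by
  obtain ⟨hsymm, -, hneg⟩ := hΓ
  have hherm : (-(1 / 2 : ℝ) • Γ).IsHermitian := IsHermitian.smul hsymm rfl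
  rw [gramAtLast, ← conjTranspose_eq_transpose_of_trivial]
  refine .of_dotProduct_mulVec_pos (isHermitian_conjTranspose_mul_mul _ hherm) fun x hx => ?_
  set y := diffLast n *ᵥ x
  have hy : y = Fin.snoc x (-∑ j, x j) := diffLast_mulVec x
  have hy0 : y ≠ 0 := fun h => hx (funext fun j => by simpa [hy] using congrFun h j.castSucc)
  have hy_sum : ∑ a, y a = 0 := by simp [hy, Fin.sum_univ_castSucc]
  have hquad : star x ⬝ᵥ ((diffLast n)ᴴ * (-(1 / 2 : ℝ) • Γ) * diffLast n) *ᵥ x =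
      -(1 / 2) * (y ⬝ᵥ Γ *ᵥ y) := by
    rw [← mulVec_mulVec, ← mulVec_mulVec, dotProduct_mulVec, ← star_mulVec, star_trivial,
      smul_mulVec, dotProduct_smul, smul_eq_mul]
  rw [hquad]
  linarith [hneg y hy0 hy_sum]

lemma gramAtLast_injOn :
    Set.InjOn gramAtLast {Γ : Matrix (Fin (n + 1)) (Fin (n + 1)) ℝ | Γ.IsSymm ∧ ∀ i, Γ i i = 0} := by
  have recover {Γ : Matrix (Fin (n + 1)) (Fin (n + 1)) ℝ} (hsymm : Γ.IsSymm)
      (hdiag : ∀ i, Γ i i = 0) (j k : Fin n) :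
      Γ j.castSucc (Fin.last n) = gramAtLast Γ j j ∧
        Γ j.castSucc k.castSucc = gramAtLast Γ j j + gramAtLast Γ k k - 2 * gramAtLast Γ j k := by
    simp only [gramAtLast_apply, hdiag, hsymm.apply (Fin.last n)]
    constructor <;> ring
  rintro Γ₁ ⟨hs₁, hd₁⟩ Γ₂ ⟨hs₂, hd₂⟩ h
  have hlast (j : Fin n) : Γ₁ j.castSucc (Fin.last n) = Γ₂ j.castSucc (Fin.last n) := by
    rw [(recover hs₁ hd₁ j j).1, (recover hs₂ hd₂ j j).1, h]
  ext a b
  induction a using Fin.lastCases with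
  | last =>
    induction b using Fin.lastCases with
    | last => rw [hd₁, hd₂]
    | cast k => rw [hs₁.apply, hs₂.apply, hlast]
  | cast j =>
    induction b using Fin.lastCases with
    | last => exact hlast j
    | cast k => rw [(recover hs₁ hd₁ j k).2, (recover hs₂ hd₂ j k).2, h]

end GramAtLast

/-- `det(CM(Γ)) > 0` on the cone `𝒞^d`, and `Γ ↦ −(1/2) log det(CM(Γ))` is strictly
convex on `𝒞^d`. -/
theorem neg_log_det_CM_strictly_convex {d : ℕ} (hd : 0 < d) :
    (∀ Γ : Matrix (Fin d) (Fin d) ℝ, memC Γ → 0 < (CM Γ).det) ∧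
    (∀ Γ₁ Γ₂ : Matrix (Fin d) (Fin d) ℝ, memC Γ₁ → memC Γ₂ → Γ₁ ≠ Γ₂ →
      ∀ t : ℝ, 0 < t → t < 1 →
        -(1 / 2) * Real.log ((CM (t • Γ₁ + (1 - t) • Γ₂)).det) <
          -(t / 2) * Real.log ((CM Γ₁).det)
            - ((1 - t) / 2) * Real.log ((CM Γ₂).det)) := by
  obtain ⟨n, rfl⟩ : ∃ n, d = n + 1 := ⟨d - 1, by omega⟩
  refine ⟨fun Γ hΓ => ?_, fun Γ₁ Γ₂ h₁ h₂ hne t ht0 ht1 => ?_⟩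
  · rw [det_CM_eq_det_gramAtLast]
    exact (gramAtLast_posDef hΓ).det_pos
  · have hgram_ne : gramAtLast Γ₁ ≠ gramAtLast Γ₂ :=
      fun h => hne (gramAtLast_injOn ⟨h₁.1, h₁.2.1⟩ ⟨h₂.1, h₂.2.1⟩ h)
    have key := strictConcaveOn_log_det.2 (gramAtLast_posDef h₁) (gramAtLast_posDef h₂)
      hgram_ne ht0 (sub_pos.2 ht1) (add_sub_cancel t 1)
    simp only [smul_eq_mul] at key
    simp only [det_CM_eq_det_gramAtLast, gramAtLast_add, gramAtLast_smul]
    linarith
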